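/- arXiv:2601.14619 — 10 statements merged into one kernel-verified Lean document; each statement's English description precedes it below -/
import Mathlib

section
/- Let G = (V,E) be a finite simple graph, let γ be a real number with 0 < γ < 1, and let S ⊆ V be nonempty such that G[S] is an edge-based γ-quasi-clique. If there exists a vertex v ∈ S whose degree within S is at most the average degree of G[S], i.e., d_S(v) ≤ 2·e(S)/|S|, then G[S \ {v}] is also an edge-based γ-quasi-clique. -/
open Finset

/-- Number of edges of the subgraph of `G` induced by the vertex set `S`. -/
def edgesIn {V : Type*} (G : SimpleGraph V) [DecidableRel G.Adj] (S : Finset V) : ℕ :=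
  ((S ×ˢ S).filter fun p => G.Adj p.1 p.2).card / 2

/-- Degree of `u` within `S`: the number of neighbors of `u` lying in `S`. -/
def degIn {V : Type*} (G : SimpleGraph V) [DecidableRel G.Adj] (S : Finset V) (u : V) : ℕ :=
  (S.filter fun v => G.Adj u v).card

/-- `G[S]` is an edge-based γ-quasi-clique: `e(S) ≥ γ * C(|S|, 2)`. -/
def IsEQC {V : Type*} (G : SimpleGraph V) [DecidableRel G.Adj] (γ : ℝ) (S : Finset V) : Prop :=
  γ * ((S.card.choose 2 : ℕ) : ℝ) ≤ (edgesIn G S : ℝ)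

/-- `G[S]` is a k-defective clique: `e(S) ≥ C(|S|, 2) - k`. -/
def IsDefective {V : Type*} (G : SimpleGraph V) [DecidableRel G.Adj] (k : ℕ) (S : Finset V) : Prop :=
  S.card.choose 2 ≤ edgesIn G S + k

/-- `get-k(s) = ⌊(1 - γ) * C(s, 2)⌋`. -/
noncomputable def getK (γ : ℝ) (s : ℕ) : ℕ :=
  (⌊(1 - γ) * ((s.choose 2 : ℕ) : ℝ)⌋).toNat

/-- `solve-defect(k)`: the maximum size of a k-defective clique in `G`. -/
noncomputable def solveDefect {V : Type*} (G : SimpleGraph V) [DecidableRel G.Adj] (k : ℕ) : ℕ :=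
  sSup {n | ∃ S : Finset V, IsDefective G k S ∧ S.card = n}

/-- `s*`: the maximum size of an edge-based γ-quasi-clique in `G`. -/
noncomputable def sStar {V : Type*} (G : SimpleGraph V) [DecidableRel G.Adj] (γ : ℝ) : ℕ :=
  sSup {n | ∃ S : Finset V, IsEQC G γ S ∧ S.card = n}

lemma edgesIn_erase {V : Type*} [DecidableEq V] (G : SimpleGraph V) [DecidableRel G.Adj]
    (S : Finset V) (v : V) (hv : v ∈ S) :
    edgesIn G S = edgesIn G (S.erase v) + degIn G S v := by
  classical
  set A := (S ×ˢ S).filter fun p => G.Adj p.1 p.2 with hA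
  set B := ((S.erase v) ×ˢ (S.erase v)).filter fun p => G.Adj p.1 p.2 with hBdef
  have hB : B = A.filter fun p => p.1 ≠ v ∧ p.2 ≠ v := by
    ext p
    simp only [hBdef, hA, mem_filter, mem_product, mem_erase]
    tauto
  set C := A.filter fun p => ¬(p.1 ≠ v ∧ p.2 ≠ v) with hCdef
  have hsplit : B.card + C.card = A.card := by
    rw [hB, hCdef]; exact card_filter_add_card_filter_not _
  have hC1 : (A.filter fun p => p.1 = v) = {v} ×ˢ (S.filter fun u => G.Adj v u) := by
    ext p
    simp only [hA, mem_filter, mem_product, mem_singleton]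
    constructor
    · rintro ⟨h1, h2, rfl⟩; aesop
    · rintro ⟨rfl, h2, h3⟩; aesop
  have hC2 : (A.filter fun p => p.1 ≠ v ∧ p.2 = v) = (S.filter fun u => G.Adj v u) ×ˢ {v} := by
    ext p
    simp only [hA, mem_filter, mem_product, mem_singleton]
    constructor
    · rintro ⟨h1, h3, rfl⟩
      exact ⟨⟨h1.1.1, h1.2.symm⟩, rfl⟩
    · rintro ⟨⟨h1, h2⟩, rfl⟩
      exact ⟨⟨⟨h1, hv⟩, h2.symm⟩, h2.symm.ne, rfl⟩
  have hCcard : C.card = 2 * degIn G S v := by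
    have : C = (A.filter fun p => p.1 = v) ∪ (A.filter fun p => p.1 ≠ v ∧ p.2 = v) := by
      ext p
      simp only [hCdef, mem_filter, mem_union]
      tauto
    rw [this, card_union_of_disjoint, hC1, hC2, card_product, card_product,
      card_singleton, degIn]
    · ring
    · rw [disjoint_filter]
      rintro p _ rfl
      tauto
  have hAcard : A.card = B.card + 2 * degIn G S v := by omega
  show A.card / 2 = B.card / 2 + degIn G S v
  rw [hAcard, Nat.add_mul_div_left _ _ (by norm_num : 0 < 2)]

theorem quasi_hereditary_avg_degree
    {V : Type*} [Fintype V] [DecidableEq V] (G : SimpleGraph V) [DecidableRel G.Adj]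
    (γ : ℝ) (hγ0 : 0 < γ) (hγ1 : γ < 1)
    (S : Finset V) (hS : S.Nonempty) (hEQC : IsEQC G γ S)
    (v : V) (hv : v ∈ S)
    (hdeg : (degIn G S v : ℝ) ≤ 2 * (edgesIn G S : ℝ) / (S.card : ℝ)) :
    IsEQC G γ (S.erase v) := by
  have key := edgesIn_erase G S v hv
  unfold IsEQC at *
  have hcard : (S.erase v).card = S.card - 1 := card_erase_of_mem hv
  have hs1 : 1 ≤ S.card := card_pos.mpr hS
  by_cases hs2 : S.card ≤ 2
  · have h0 : (S.erase v).card.choose 2 = 0 := by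
      rw [hcard]; exact Nat.choose_eq_zero_of_lt (by omega)
    rw [h0]
    simp
  · push_neg at hs2
    have hs3 : 3 ≤ S.card := hs2
    set s : ℝ := (S.card : ℝ) with hsdef
    have hsR : (3 : ℝ) ≤ s := by rw [hsdef]; exact_mod_cast hs3
    have he : (edgesIn G S : ℝ) = (edgesIn G (S.erase v) : ℝ) + (degIn G S v : ℝ) := by
      exact_mod_cast key
    have hc1 : ((S.card.choose 2 : ℕ) : ℝ) = s * (s - 1) / 2 := by
      rw [Nat.cast_choose_two]
    have hc2 : (((S.erase v).card.choose 2 : ℕ) : ℝ) = (s - 1) * (s - 2) / 2 := by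
      rw [Nat.cast_choose_two, hcard]
      have : ((S.card - 1 : ℕ) : ℝ) = s - 1 := by
        push_cast [Nat.cast_sub hs1]
        ring
      rw [this]
      ring
    rw [hc2]
    rw [hc1] at hEQC
    have hspos : (0 : ℝ) < s := by linarith
    have hd : (degIn G S v : ℝ) * s ≤ 2 * (edgesIn G S : ℝ) := by
      calc (degIn G S v : ℝ) * s ≤ (2 * (edgesIn G S : ℝ) / s) * s :=
            mul_le_mul_of_nonneg_right hdeg (le_of_lt hspos)
        _ = 2 * (edgesIn G S : ℝ) := by field_simp
    set e : ℝ := (edgesIn G S : ℝ)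
    set e' : ℝ := (edgesIn G (S.erase v) : ℝ)
    set d : ℝ := (degIn G S v : ℝ)
    nlinarith [mul_le_mul_of_nonneg_right hEQC (by linarith : (0:ℝ) ≤ s - 2), hspos]
end

section
/- Let G = (V,E) be a finite simple graph, let γ be a real number with 0 < γ < 1, and let S ⊆ V be nonempty such that G[S] is an edge-based γ-quasi-clique. If v ∈ S is a vertex of minimum degree within S, i.e., d_S(v) ≤ d_S(u) for all u ∈ S, then G[S \ {v}] is also an edge-based γ-quasi-clique. -/
open Finset

lemma pair_sum {V : Type*} [DecidableEq V] (G : SimpleGraph V) [DecidableRel G.Adj]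
    (S : Finset V) :
    ((S ×ˢ S).filter fun p => G.Adj p.1 p.2).card = ∑ u ∈ S, degIn G S u := by
  rw [Finset.card_filter, Finset.sum_product]
  refine Finset.sum_congr rfl fun u _ => ?_
  rw [degIn, Finset.card_filter]

lemma pair_erase {V : Type*} [DecidableEq V] (G : SimpleGraph V) [DecidableRel G.Adj]
    (S : Finset V) (v : V) (hv : v ∈ S) :
    ((S ×ˢ S).filter fun p => G.Adj p.1 p.2).card
      = (((S.erase v) ×ˢ (S.erase v)).filter fun p => G.Adj p.1 p.2).card
        + 2 * degIn G S v := by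
  rw [pair_sum, pair_sum, ← Finset.add_sum_erase _ _ hv]
  have h1 : ∀ u ∈ S.erase v,
      degIn G S u = degIn G (S.erase v) u + (if G.Adj u v then 1 else 0) := by
    intro u hu
    unfold degIn
    rw [Finset.filter_erase]
    by_cases h : G.Adj u v
    · have hvmem : v ∈ S.filter fun w => G.Adj u w := Finset.mem_filter.2 ⟨hv, h⟩
      have hpos : 0 < (S.filter fun w => G.Adj u w).card := Finset.card_pos.2 ⟨v, hvmem⟩
      rw [Finset.card_erase_of_mem hvmem, if_pos h]
      omega
    · rw [Finset.erase_eq_of_notMem (by simp [h]), if_neg h]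
      simp
  rw [Finset.sum_congr rfl h1, Finset.sum_add_distrib]
  have h2 : (∑ u ∈ S.erase v, if G.Adj u v then 1 else 0) = degIn G S v := by
    rw [← Finset.card_filter]
    unfold degIn
    congr 1
    ext u
    simp only [Finset.mem_filter, Finset.mem_erase]
    constructor
    · rintro ⟨⟨hne, hu⟩, h⟩; exact ⟨hu, h.symm⟩
    · rintro ⟨hu, h⟩; exact ⟨⟨fun he => G.irrefl (he ▸ h), hu⟩, h.symm⟩
  rw [h2]; ring

lemma pair_even {V : Type*} [DecidableEq V] (G : SimpleGraph V) [DecidableRel G.Adj]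
    (S : Finset V) : Even (((S ×ˢ S).filter fun p => G.Adj p.1 p.2).card) := by
  induction S using Finset.strongInduction with
  | _ S ih =>
    rcases S.eq_empty_or_nonempty with rfl | ⟨v, hv⟩
    · simp
    · rw [pair_erase G S v hv]
      exact ((ih _ (Finset.erase_ssubset hv)).add (even_two_mul _))


theorem quasi_hereditary_min_degree
    {V : Type*} [Fintype V] [DecidableEq V] (G : SimpleGraph V) [DecidableRel G.Adj]
    (γ : ℝ) (hγ0 : 0 < γ) (hγ1 : γ < 1)
    (S : Finset V) (hS : S.Nonempty) (hEQC : IsEQC G γ S)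
    (v : V) (hv : v ∈ S) (hmin : ∀ u ∈ S, degIn G S v ≤ degIn G S u) :
    IsEQC G γ (S.erase v) := by
  unfold IsEQC edgesIn at hEQC ⊢
  by_cases hn2 : S.card ≤ 2
  · have hc1 : (S.erase v).card ≤ 1 := by
      rw [Finset.card_erase_of_mem hv]; omega
    have hc0 : (S.erase v).card.choose 2 = 0 := Nat.choose_eq_zero_of_lt (by omega)
    rw [hc0]
    simp
  · push_neg at hn2
    obtain ⟨a, ha⟩ := pair_even G S
    obtain ⟨b, hb⟩ := pair_even G (S.erase v)
    have hpe := pair_erase G S v hv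
    set d := degIn G S v with hd
    have hab : a = b + d := by omega
    have hEa : ((S ×ˢ S).filter fun p => G.Adj p.1 p.2).card / 2 = a := by omega
    have hEb : (((S.erase v) ×ˢ (S.erase v)).filter fun p => G.Adj p.1 p.2).card / 2 = b := by
      omega
    rw [hEa] at hEQC
    rw [hEb]
    have hhs : S.card * d ≤ 2 * a := by
      have h1 : S.card • d ≤ ∑ u ∈ S, degIn G S u :=
        Finset.card_nsmul_le_sum S (degIn G S) d (fun u hu => hmin u hu)
      rw [← pair_sum, smul_eq_mul] at h1
      omega
    have hcard : (S.erase v).card = S.card - 1 := Finset.card_erase_of_mem hv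
    rw [hcard]
    have hn3 : 3 ≤ S.card := hn2
    have hnR : (3:ℝ) ≤ (S.card : ℝ) := by exact_mod_cast hn3
    rw [Nat.cast_choose_two] at hEQC ⊢
    have hc : ((S.card - 1 : ℕ) : ℝ) = (S.card : ℝ) - 1 := by
      push_cast [Nat.cast_sub (by omega : 1 ≤ S.card)]; ring
    rw [hc]
    have habR : (a:ℝ) = (b:ℝ) + (d:ℝ) := by exact_mod_cast hab
    have hhsR : (S.card : ℝ) * d ≤ 2 * a := by exact_mod_cast hhs
    have hkey : γ * ((S.card:ℝ) * ((S.card:ℝ) - 1) / 2) * ((S.card:ℝ) - 2)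
        ≤ (a:ℝ) * ((S.card:ℝ) - 2) :=
      mul_le_mul_of_nonneg_right hEQC (by linarith)
    nlinarith [mul_pos (lt_of_lt_of_le (by norm_num : (0:ℝ) < 3) hnR) hγ0]
end

section
/- Let G = (V,E) be a finite simple graph and let γ be a real number with 0 < γ < 1. For every natural number s with 1 ≤ s ≤ s*, it holds that s ≤ solve-defect(get-k(s)). -/
/-!
Deleting a vertex of minimum degree from a γ-quasi-clique on `n` vertices leaves a γ-quasi-clique:
that vertex has degree at most `2e/n`, while `C(n-1,2) = C(n,2)·(n-2)/n`. Hence a maximum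
quasi-clique contains quasi-cliques of every smaller size `s`, and a γ-quasi-clique on `s`
vertices misses fewer than `(1-γ)·C(s,2) + 1` edges, i.e. at most `get-k(s)` of them.
-/

open Finset

namespace SimpleGraph

variable {V : Type*} (G : SimpleGraph V) [DecidableRel G.Adj]

def adjPairs (S : Finset V) : ℕ :=
  #((S ×ˢ S).filter fun p => G.Adj p.1 p.2)

lemma adjPairs_eq_sum_degIn (S : Finset V) : G.adjPairs S = ∑ v ∈ S, degIn G S v := by
  simp only [adjPairs, degIn, card_filter, sum_product]

lemma degIn_insert_self {T : Finset V} [DecidableEq V] (u : V) :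
    degIn G (insert u T) u = degIn G T u := by
  simp [degIn, filter_insert]

lemma adjPairs_insert [DecidableEq V] {T : Finset V} {u : V} (hu : u ∉ T) :
    G.adjPairs (insert u T) = G.adjPairs T + 2 * degIn G T u := by
  simp only [adjPairs_eq_sum_degIn, degIn, card_filter, sum_insert hu, G.irrefl, if_false,
    zero_add, sum_add_distrib, G.adj_comm _ u]
  ring

lemma two_mul_edgesIn (S : Finset V) : 2 * edgesIn G S = G.adjPairs S := by
  classical
  suffices Even (G.adjPairs S) from Nat.two_mul_div_two_of_even this
  induction S using Finset.induction_on with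
  | empty => simp [adjPairs]
  | insert u T hu ih => rw [G.adjPairs_insert hu]; exact ih.add (even_two_mul _)

lemma sum_degIn_eq_two_mul_edgesIn (S : Finset V) :
    ∑ v ∈ S, degIn G S v = 2 * edgesIn G S := by
  rw [two_mul_edgesIn, adjPairs_eq_sum_degIn]

lemma edgesIn_erase_add_degIn [DecidableEq V] {S : Finset V} {u : V} (hu : u ∈ S) :
    edgesIn G (S.erase u) + degIn G S u = edgesIn G S := by
  have h := G.adjPairs_insert (notMem_erase u S)
  rw [insert_erase hu, ← two_mul_edgesIn, ← two_mul_edgesIn, ← G.degIn_insert_self u,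
    insert_erase hu] at h
  omega

lemma card_mul_degIn_le_of_forall_le {S : Finset V} {u : V}
    (hmin : ∀ v ∈ S, degIn G S u ≤ degIn G S v) : #S * degIn G S u ≤ 2 * edgesIn G S := by
  rw [← sum_degIn_eq_two_mul_edgesIn, ← smul_eq_mul]
  exact card_nsmul_le_sum _ _ _ hmin

end SimpleGraph

section

variable {V : Type*} {G : SimpleGraph V} [DecidableRel G.Adj] {γ : ℝ}

lemma IsEQC.erase_of_forall_degIn_le [DecidableEq V] {S : Finset V} {u : V} (hS : IsEQC G γ S)
    (hu : u ∈ S) (hmin : ∀ v ∈ S, degIn G S u ≤ degIn G S v) : IsEQC G γ (S.erase u) := by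
  obtain ⟨m, hm⟩ : ∃ m, #S = m + 1 := Nat.exists_eq_add_one.2 (card_pos.2 ⟨u, hu⟩)
  have hdeg : ((m : ℝ) + 1) * degIn G S u ≤ 2 * edgesIn G S := by
    exact_mod_cast hm ▸ G.card_mul_degIn_le_of_forall_le hmin
  have hsplit : (edgesIn G (S.erase u) : ℝ) = edgesIn G S - degIn G S u := by
    rw [← G.edgesIn_erase_add_degIn hu]; push_cast; ring
  unfold IsEQC at hS ⊢
  rw [card_erase_of_mem hu, hm, Nat.add_sub_cancel, hsplit]
  rw [hm, Nat.cast_choose_two, Nat.cast_add_one] at hS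
  rw [Nat.cast_choose_two]
  rcases Nat.eq_zero_or_pos m with rfl | hm1
  · simpa using le_add_self.trans_eq (G.edgesIn_erase_add_degIn hu)
  have hm1 : (1 : ℝ) ≤ m := by exact_mod_cast hm1
  refine le_of_mul_le_mul_left ?_ (by positivity : (0 : ℝ) < m + 1)
  calc ((m : ℝ) + 1) * (γ * (m * (m - 1) / 2))
      = (m - 1) * (γ * ((m + 1) * (m + 1 - 1) / 2)) := by ring
    _ ≤ (m - 1) * edgesIn G S := by gcongr
    _ ≤ (m + 1) * (edgesIn G S - degIn G S u) := by linarith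

lemma IsEQC.exists_card_eq {S : Finset V} (hS : IsEQC G γ S) {m : ℕ} (hm : m ≤ #S) :
    ∃ T : Finset V, IsEQC G γ T ∧ #T = m := by
  classical
  induction S using Finset.strongInduction with
  | H S ih =>
    rcases hm.eq_or_lt with rfl | hlt
    · exact ⟨S, hS, rfl⟩
    obtain ⟨u, hu, hmin⟩ := S.exists_min_image (degIn G S) (card_pos.1 (by omega))
    exact ih _ (erase_ssubset hu) (hS.erase_of_forall_degIn_le hu hmin)
      (by rw [card_erase_of_mem hu]; omega)

variable (γ) in
lemma lt_getK_add_one (s : ℕ) : (1 - γ) * (s.choose 2 : ℕ) < getK γ s + 1 := by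
  calc (1 - γ) * (s.choose 2 : ℕ) < ⌊(1 - γ) * ((s.choose 2 : ℕ) : ℝ)⌋ + 1 :=
        Int.lt_floor_add_one _
    _ ≤ getK γ s + 1 := by gcongr; exact_mod_cast Int.self_le_toNat _

lemma IsEQC.isDefective_getK {S : Finset V} (hS : IsEQC G γ S) :
    IsDefective G (getK γ #S) S := by
  unfold IsEQC at hS
  have h : (((#S).choose 2 : ℕ) : ℝ) < edgesIn G S + getK γ #S + 1 := by
    linarith [lt_getK_add_one γ #S]
  have : (#S).choose 2 < edgesIn G S + getK γ #S + 1 := by exact_mod_cast h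
  unfold IsDefective
  omega

lemma bddAbove_setOf_card [Fintype V] (P : Finset V → Prop) :
    BddAbove {n | ∃ S : Finset V, P S ∧ #S = n} :=
  ⟨Fintype.card V, by rintro _ ⟨S, -, rfl⟩; exact S.card_le_univ⟩

lemma IsDefective.card_le_solveDefect [Fintype V] {k : ℕ} {S : Finset V}
    (hS : IsDefective G k S) :
    #S ≤ solveDefect G k :=
  le_csSup (bddAbove_setOf_card _) (by exact ⟨S, hS, rfl⟩)

variable (G γ) in
lemma exists_isEQC_card_eq_sStar [Fintype V] : ∃ S : Finset V, IsEQC G γ S ∧ #S = sStar G γ :=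
  Nat.sSup_mem ⟨0, by exact ⟨∅, by simp [IsEQC], rfl⟩⟩ (bddAbove_setOf_card _)

end

theorem check_true_below_sStar_general
    {V : Type*} [Fintype V]
    (G : SimpleGraph V) [DecidableRel G.Adj]
    (γ : ℝ) :
    ∀ s : ℕ, 1 ≤ s → s ≤ sStar G γ → s ≤ solveDefect G (getK γ s) := by
  intro s _ hs
  obtain ⟨S, hS, hcard⟩ := exists_isEQC_card_eq_sStar G γ
  obtain ⟨T, hT, rfl⟩ := hS.exists_card_eq (hcard ▸ hs)
  exact hT.isDefective_getK.card_le_solveDefect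

theorem check_true_below_sStar
    {V : Type*} [Fintype V] [DecidableEq V] [Nonempty V]
    (G : SimpleGraph V) [DecidableRel G.Adj]
    (γ : ℝ) (hγ0 : 0 < γ) (hγ1 : γ < 1) :
    ∀ s : ℕ, 1 ≤ s → s ≤ sStar G γ → s ≤ solveDefect G (getK γ s) :=
  check_true_below_sStar_general G γ
end

section
/- Let G = (V,E) be a finite simple graph and let γ be a real number with 0 < γ < 1. For every natural number s with s > s*, it holds that solve-defect(get-k(s)) < s. -/
open Finset

theorem check_false_above_sStar
    {V : Type*} [Fintype V] [DecidableEq V] [Nonempty V]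
    (G : SimpleGraph V) [DecidableRel G.Adj]
    (γ : ℝ) (hγ0 : 0 < γ) (hγ1 : γ < 1) :
    ∀ s : ℕ, sStar G γ < s → solveDefect G (getK γ s) < s := by
  intro s hs
  have hbddD : BddAbove {n | ∃ S : Finset V, IsDefective G (getK γ s) S ∧ S.card = n} := by
    refine ⟨Fintype.card V, fun n hn => ?_⟩
    obtain ⟨S, _, rfl⟩ := hn
    exact S.card_le_univ.trans_eq (by simp)
  have hbddE : BddAbove {n | ∃ S : Finset V, IsEQC G γ S ∧ S.card = n} := by
    refine ⟨Fintype.card V, fun n hn => ?_⟩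
    obtain ⟨S, _, rfl⟩ := hn
    exact S.card_le_univ.trans_eq (by simp)
  have hne : ({n | ∃ S : Finset V, IsDefective G (getK γ s) S ∧ S.card = n} : Set ℕ).Nonempty := by
    refine ⟨0, ∅, ?_, by simp⟩
    simp [IsDefective]
  rw [solveDefect]
  obtain ⟨S, hS, hcard⟩ := Nat.sSup_mem hne hbddD
  rw [← hcard]
  by_contra hlt
  push_neg at hlt
  -- hlt : s ≤ S.card
  have hEQC : IsEQC G γ S := by
    have hk : ((getK γ s : ℕ) : ℝ) ≤ (1 - γ) * ((s.choose 2 : ℕ) : ℝ) := by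
      have hx : (0:ℝ) ≤ (1 - γ) * ((s.choose 2 : ℕ) : ℝ) := by
        have : (0:ℝ) ≤ 1 - γ := by linarith
        positivity
      have h0 := Int.floor_nonneg.mpr hx
      have hfl := Int.floor_le ((1 - γ) * ((s.choose 2 : ℕ) : ℝ))
      rw [getK]
      rw [show (((⌊(1 - γ) * ((s.choose 2 : ℕ) : ℝ)⌋.toNat : ℕ)) : ℝ)
          = ((⌊(1 - γ) * ((s.choose 2 : ℕ) : ℝ)⌋ : ℤ) : ℝ) by
        exact_mod_cast congrArg (Int.cast : ℤ → ℝ) (Int.toNat_of_nonneg h0)]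
      exact hfl
    have hcs : ((s.choose 2 : ℕ) : ℝ) ≤ ((S.card.choose 2 : ℕ) : ℝ) := by
      exact_mod_cast Nat.choose_le_choose 2 hlt
    have hdef : ((S.card.choose 2 : ℕ) : ℝ) ≤ (edgesIn G S : ℝ) + ((getK γ s : ℕ) : ℝ) := by
      exact_mod_cast hS
    have h1γ : (1 - γ) * ((s.choose 2 : ℕ) : ℝ) ≤ (1 - γ) * ((S.card.choose 2 : ℕ) : ℝ) := by
      apply mul_le_mul_of_nonneg_left hcs; linarith
    unfold IsEQC
    nlinarith
  have : S.card ≤ sStar G γ := le_csSup hbddE ⟨S, hEQC, rfl⟩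
  omega
end

section
/- Let G = (V,E) be a finite simple graph and let γ be a real number with 0 < γ < 1. If a natural number s ≥ 1 satisfies s = solve-defect(get-k(s)), then s ≤ s*. -/
open Finset

theorem fixed_point_le_sStar
    {V : Type*} [Fintype V] [DecidableEq V] [Nonempty V]
    (G : SimpleGraph V) [DecidableRel G.Adj]
    (γ : ℝ) (hγ0 : 0 < γ) (hγ1 : γ < 1)
    (s : ℕ) (hs : 1 ≤ s) (h : s = solveDefect G (getK γ s)) :
    s ≤ sStar G γ := by
  -- The defective-clique set is nonempty (∅) and bounded, so sSup is attained.
  set k := getK γ s with hk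
  have hbdd : ∀ n ∈ {n | ∃ S : Finset V, IsDefective G k S ∧ S.card = n},
      n ≤ Fintype.card V := by
    rintro n ⟨S, -, rfl⟩
    exact Finset.card_le_univ S
  have hne : {n | ∃ S : Finset V, IsDefective G k S ∧ S.card = n}.Nonempty := by
    refine ⟨0, ∅, ?_, by simp⟩
    simp [IsDefective, edgesIn]
  have hmem : s ∈ {n | ∃ S : Finset V, IsDefective G k S ∧ S.card = n} := by
    rw [h]
    exact Nat.sSup_mem hne ⟨Fintype.card V, fun n hn => hbdd n hn⟩
  obtain ⟨S, hS, hcard⟩ := hmem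
  have heqc : IsEQC G γ S := by
    unfold IsEQC
    have h1 : ((S.card.choose 2 : ℕ) : ℝ) ≤ (edgesIn G S : ℝ) + (k : ℝ) := by
      exact_mod_cast hS
    have h2 : (k : ℝ) ≤ (1 - γ) * ((s.choose 2 : ℕ) : ℝ) := by
      have hnn : (0:ℝ) ≤ (1 - γ) * ((s.choose 2 : ℕ) : ℝ) := mul_nonneg (by linarith) (Nat.cast_nonneg _)
      rw [hk, getK]
      rw [show ((((⌊(1 - γ) * ((s.choose 2 : ℕ) : ℝ)⌋).toNat : ℕ)) : ℝ)
          = ((⌊(1 - γ) * ((s.choose 2 : ℕ) : ℝ)⌋ : ℤ) : ℝ) from by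
        exact_mod_cast congrArg (fun z : ℤ => (z : ℝ))
          (Int.toNat_of_nonneg (Int.floor_nonneg.2 hnn))]
      exact Int.floor_le _
    rw [hcard] at h1
    rw [hcard]
    linarith
  have : s ∈ {n | ∃ S : Finset V, IsEQC G γ S ∧ S.card = n} := ⟨S, heqc, hcard⟩
  exact le_csSup ⟨Fintype.card V, by rintro n ⟨T, -, rfl⟩; exact Finset.card_le_univ T⟩ this
end

section
/- Let G = (V,E) be a finite simple graph and let γ be a real number with 0 < γ < 1. If ub is a natural number with ub > s*, and ub' = solve-defect(get-k(ub)), then s* ≤ ub' < ub; in other words, one iteration of the top-down framework produces a strictly tighter upper bound on s*. -/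
open Finset

theorem top_down_strict_decrease
    {V : Type*} [Fintype V] [DecidableEq V] [Nonempty V]
    (G : SimpleGraph V) [DecidableRel G.Adj]
    (γ : ℝ) (hγ0 : 0 < γ) (hγ1 : γ < 1)
    (ub : ℕ) (hub : sStar G γ < ub) :
    sStar G γ ≤ solveDefect G (getK γ ub) ∧ solveDefect G (getK γ ub) < ub := by
  classical
  set k := getK γ ub with hk
  -- basic facts about the floor value
  have hchub : (0:ℝ) ≤ (1 - γ) * ((ub.choose 2 : ℕ) : ℝ) :=
    mul_nonneg (by linarith) (Nat.cast_nonneg _)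
  have hfloor : ((k : ℕ) : ℤ) = ⌊(1 - γ) * ((ub.choose 2 : ℕ) : ℝ)⌋ := by
    rw [hk, getK]
    exact Int.toNat_of_nonneg (Int.le_floor.mpr (by exact_mod_cast hchub))
  have hkle : (k : ℝ) ≤ (1 - γ) * ((ub.choose 2 : ℕ) : ℝ) := by
    have h1 : ((k : ℕ) : ℝ) = ((⌊(1 - γ) * ((ub.choose 2 : ℕ) : ℝ)⌋ : ℤ) : ℝ) := by
      exact_mod_cast congrArg (fun z : ℤ => (z : ℝ)) hfloor
    rw [h1]
    exact Int.floor_le _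
  -- boundedness and nonemptiness of the two sets
  have hbddE : BddAbove {n | ∃ S : Finset V, IsEQC G γ S ∧ S.card = n} := by
    refine ⟨Fintype.card V, ?_⟩
    rintro n ⟨S, -, rfl⟩
    simpa using S.card_le_univ
  have hbddD : BddAbove {n | ∃ S : Finset V, IsDefective G k S ∧ S.card = n} := by
    refine ⟨Fintype.card V, ?_⟩
    rintro n ⟨S, -, rfl⟩
    simpa using S.card_le_univ
  have hneE : ({n | ∃ S : Finset V, IsEQC G γ S ∧ S.card = n}).Nonempty := by
    refine ⟨0, ∅, ?_, by simp⟩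
    simp [IsEQC]
  have hneD : ({n | ∃ S : Finset V, IsDefective G k S ∧ S.card = n}).Nonempty := by
    refine ⟨0, ∅, ?_, by simp⟩
    simp [IsDefective]
  -- the witness for sStar
  obtain ⟨S, hSE, hScard⟩ := Nat.sSup_mem hneE hbddE
  have hScard' : S.card = sStar G γ := hScard
  -- S is k-defective
  have hch : ((S.card.choose 2 : ℕ) : ℝ) ≤ ((ub.choose 2 : ℕ) : ℝ) := by
    have : S.card ≤ ub := by
      have := hub
      omega
    exact_mod_cast Nat.choose_le_choose 2 this
  have hSdef : IsDefective G k S := by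
    unfold IsDefective
    have hE : γ * ((S.card.choose 2 : ℕ) : ℝ) ≤ (edgesIn G S : ℝ) := hSE
    have h2 : ((S.card.choose 2 : ℤ) - (edgesIn G S : ℤ)) ≤
        ⌊(1 - γ) * ((ub.choose 2 : ℕ) : ℝ)⌋ := by
      rw [Int.le_floor]
      push_cast
      nlinarith [hE, hch, Nat.cast_nonneg (α := ℝ) (S.card.choose 2)]
    rw [← hfloor] at h2
    omega
  constructor
  · -- first part
    have : S.card ∈ {n | ∃ T : Finset V, IsDefective G k T ∧ T.card = n} :=
      ⟨S, hSdef, rfl⟩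
    calc sStar G γ = S.card := hScard.symm
      _ ≤ solveDefect G k := le_csSup hbddD this
  · -- second part
    by_contra hcon
    push_neg at hcon
    obtain ⟨T, hTdef, hTcard⟩ := Nat.sSup_mem hneD hbddD
    have hTub : ub ≤ T.card := by
      rw [hTcard]; exact hcon
    have hchT : ((ub.choose 2 : ℕ) : ℝ) ≤ ((T.card.choose 2 : ℕ) : ℝ) := by
      exact_mod_cast Nat.choose_le_choose 2 hTub
    have hTE : IsEQC G γ T := by
      unfold IsEQC
      have hd : ((T.card.choose 2 : ℕ) : ℝ) ≤ (edgesIn G T : ℝ) + k := by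
        exact_mod_cast hTdef
      nlinarith [hd, hkle, hchT]
    have : T.card ≤ sStar G γ :=
      le_csSup hbddE ⟨T, hTE, rfl⟩
    omega
end

section
/- Let G = (V,E) be a finite simple graph and let γ be a real number with 0 < γ < 1. Then s* is a fixed point of the iteration map, i.e., solve-defect(get-k(s*)) = s*. -/
open Finset

theorem sStar_fixed_point
    {V : Type*} [Fintype V] [DecidableEq V] [Nonempty V]
    (G : SimpleGraph V) [DecidableRel G.Adj]
    (γ : ℝ) (hγ0 : 0 < γ) (hγ1 : γ < 1) :
    solveDefect G (getK γ (sStar G γ)) = sStar G γ := by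
  classical
  set s := sStar G γ with hs
  set k := getK γ s with hk
  set A : Set ℕ := {n | ∃ S : Finset V, IsEQC G γ S ∧ S.card = n} with hA
  set D : Set ℕ := {n | ∃ S : Finset V, IsDefective G k S ∧ S.card = n} with hD
  have hAne : A.Nonempty := ⟨0, ∅, by simp [IsEQC, edgesIn], by simp⟩
  have hAbdd : BddAbove A := ⟨Fintype.card V, fun n hn => by
    obtain ⟨S, _, hS⟩ := hn; exact hS ▸ S.card_le_univ⟩
  have hDne : D.Nonempty := ⟨0, ∅, by simp [IsDefective, edgesIn], by simp⟩
  have hDbdd : BddAbove D := ⟨Fintype.card V, fun n hn => by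
    obtain ⟨S, _, hS⟩ := hn; exact hS ▸ S.card_le_univ⟩
  have hsA : s ∈ A := Nat.sSup_mem hAne hAbdd
  obtain ⟨S, hSE, hScard⟩ := hsA
  -- facts about k
  have hx0 : (0:ℝ) ≤ (1 - γ) * ((s.choose 2 : ℕ) : ℝ) :=
    mul_nonneg (by linarith) (Nat.cast_nonneg _)
  have hkr : (k : ℝ) = (⌊(1 - γ) * ((s.choose 2 : ℕ) : ℝ)⌋ : ℤ) := by
    rw [hk, getK]
    have := Int.toNat_of_nonneg (Int.floor_nonneg.mpr hx0)
    exact_mod_cast congrArg (fun z : ℤ => (z : ℝ)) this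
  have hkle : (k : ℝ) ≤ (1 - γ) * ((s.choose 2 : ℕ) : ℝ) := by
    rw [hkr]; exact Int.floor_le _
  have hklt : (1 - γ) * ((s.choose 2 : ℕ) : ℝ) < (k : ℝ) + 1 := by
    rw [hkr]; exact Int.lt_floor_add_one _
  -- S is k-defective
  have hSD : IsDefective G k S := by
    rw [IsDefective]
    have hr : ((s.choose 2 : ℕ) : ℝ) < (edgesIn G S : ℝ) + (k : ℝ) + 1 := by
      have := hSE
      rw [IsEQC, hScard] at this
      nlinarith
    rw [hScard]
    have : s.choose 2 < edgesIn G S + k + 1 := by exact_mod_cast hr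
    omega
  have h1 : s ≤ solveDefect G k := le_csSup hDbdd ⟨S, hSD, hScard⟩
  have hdD : solveDefect G k ∈ D := Nat.sSup_mem hDne hDbdd
  obtain ⟨T, hTD, hTcard⟩ := hdD
  have h2 : solveDefect G k ≤ s := by
    rcases le_or_gt T.card s with h | h
    · omega
    · -- T is an EQC
      have hcs : ((s.choose 2 : ℕ) : ℝ) ≤ ((T.card.choose 2 : ℕ) : ℝ) := by
        exact_mod_cast Nat.choose_le_choose 2 h.le
      have hTr : ((T.card.choose 2 : ℕ) : ℝ) ≤ (edgesIn G T : ℝ) + (k : ℝ) := by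
        exact_mod_cast hTD
      have hTE : IsEQC G γ T := by
        rw [IsEQC]
        nlinarith
      have : T.card ≤ s := le_csSup hAbdd ⟨T, hTE, rfl⟩
      omega
  omega
end

section
/- Let G = (V,E) be a finite simple graph and let γ be a real number with 0 < γ < 1. Then s* is the greatest natural number s ≥ 1 satisfying s ≤ solve-defect(get-k(s)); that is, s* ≤ solve-defect(get-k(s*)), and every natural number s with s ≤ solve-defect(get-k(s)) satisfies s ≤ s*. (This establishes the correctness of the bottom-up search EQC-BU.) -/
open Finset

lemma even_card_of_invol {α : Type*} [DecidableEq α] (A : Finset α) (f : α → α)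
    (hmem : ∀ a ∈ A, f a ∈ A) (hinv : ∀ a ∈ A, f (f a) = a) (hne : ∀ a ∈ A, f a ≠ a) :
    Even A.card := by
  induction A using Finset.strongInduction with
  | _ A ih =>
    rcases A.eq_empty_or_nonempty with rfl | ⟨a, ha⟩
    · simp
    · have hfa := hmem a ha
      have hne' := hne a ha
      set B := (A.erase a).erase (f a) with hB
      have hBss : B ⊂ A :=
        Finset.ssubset_of_subset_of_ssubset (erase_subset _ _) (erase_ssubset ha)
      have hcard : B.card = A.card - 2 := by
        rw [hB, card_erase_of_mem, card_erase_of_mem ha]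
        · omega
        · exact mem_erase.2 ⟨hne', hfa⟩
      have hmemB : ∀ b ∈ B, b ∈ A := fun b hb => mem_of_mem_erase (mem_of_mem_erase hb)
      have hEB : Even B.card := by
        refine ih B hBss (fun b hb => ?_) (fun b hb => hinv b (hmemB b hb))
          (fun b hb => hne b (hmemB b hb))
        have hbA := hmemB b hb
        simp only [hB, mem_erase] at hb ⊢
        refine ⟨fun h => hb.2.1 ?_, fun h => hb.1 ?_, hmem b hbA⟩
        · rw [← hinv b hbA, h]; exact hinv a ha
        · rw [← hinv b hbA, h]
      have h2 : 2 ≤ A.card := by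
        have hx : f a ∈ A.erase a := mem_erase.2 ⟨hne', hfa⟩
        have := card_erase_of_mem ha
        have := card_pos.2 ⟨f a, hx⟩
        omega
      obtain ⟨k, hk⟩ := hEB
      exact ⟨k + 1, by omega⟩

/-- Number of ordered non-adjacent distinct pairs in `S`. -/
def missing {V : Type*} [DecidableEq V] (G : SimpleGraph V) [DecidableRel G.Adj] (S : Finset V) : ℕ :=
  (S.offDiag.filter fun p => ¬ G.Adj p.1 p.2).card

lemma two_mul_edgesIn {V : Type*} [DecidableEq V] (G : SimpleGraph V) [DecidableRel G.Adj]
    (S : Finset V) :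
    2 * edgesIn G S = ((S ×ˢ S).filter fun p => G.Adj p.1 p.2).card := by
  have hev : Even ((S ×ˢ S).filter fun p => G.Adj p.1 p.2).card := by
    refine even_card_of_invol _ Prod.swap ?_ ?_ ?_
    · intro a ha
      simp only [mem_filter, mem_product] at ha ⊢
      exact ⟨⟨ha.1.2, ha.1.1⟩, ha.2.symm⟩
    · intro a _; simp
    · intro a ha hcontra
      simp only [mem_filter] at ha
      have h1 : a.1 = a.2 := by
        have := congrArg Prod.fst hcontra
        simpa using this.symm
      exact G.irrefl (h1 ▸ ha.2)
  obtain ⟨k, hk⟩ := hev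
  simp only [edgesIn, hk]
  omega

lemma count_eq {V : Type*} [DecidableEq V] (G : SimpleGraph V) [DecidableRel G.Adj]
    (S : Finset V) :
    2 * edgesIn G S + missing G S = 2 * S.card.choose 2 := by
  have h1 : S.offDiag.filter (fun p => G.Adj p.1 p.2)
      = (S ×ˢ S).filter fun p => G.Adj p.1 p.2 := by
    ext p
    simp only [mem_filter, mem_offDiag, mem_product]
    constructor
    · rintro ⟨⟨h1, h2, _⟩, h4⟩; exact ⟨⟨h1, h2⟩, h4⟩
    · rintro ⟨⟨h1, h2⟩, h4⟩; exact ⟨⟨h1, h2, G.ne_of_adj h4⟩, h4⟩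
  have h2 := Finset.card_filter_add_card_filter_not
    (s := S.offDiag) (p := fun p => G.Adj p.1 p.2)
  rw [h1] at h2
  have h3 : S.offDiag.card = S.card * S.card - S.card := offDiag_card S
  have h4 : 2 * S.card.choose 2 = S.card * S.card - S.card := by
    rw [Nat.choose_two_right]
    have hev : 2 ∣ S.card * (S.card - 1) := by
      rcases Nat.even_or_odd S.card with h | h
      · exact Dvd.dvd.mul_right h.two_dvd _
      · rcases h with ⟨m, hm⟩
        have : S.card - 1 = 2 * m := by omega
        rw [this]
        exact Dvd.dvd.mul_left ⟨m, by ring⟩ _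
    rw [Nat.mul_div_cancel' hev]
    rcases Nat.eq_zero_or_pos S.card with h | h
    · simp [h]
    · have : S.card * (S.card - 1) = S.card * S.card - S.card := by
        cases' S.card with n
        · simp
        · simp [Nat.succ_sub_one, Nat.mul_succ, Nat.succ_mul]
      omega
  rw [two_mul_edgesIn] at *
  unfold missing
  omega

lemma defective_iff_missing {V : Type*} [DecidableEq V] (G : SimpleGraph V) [DecidableRel G.Adj]
    (k : ℕ) (S : Finset V) :
    IsDefective G k S ↔ missing G S ≤ 2 * k := by
  have := count_eq G S
  unfold IsDefective
  omega

lemma missing_mono {V : Type*} [DecidableEq V] (G : SimpleGraph V) [DecidableRel G.Adj]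
    {S T : Finset V} (h : T ⊆ S) : missing G T ≤ missing G S := by
  unfold missing
  exact card_le_card (filter_subset_filter _ (offDiag_mono h))

lemma eqc_iff_defective {V : Type*} [DecidableEq V] (G : SimpleGraph V) [DecidableRel G.Adj]
    {γ : ℝ} (hγ1 : γ < 1) (S : Finset V) :
    IsEQC G γ S ↔ IsDefective G (getK γ S.card) S := by
  unfold IsEQC IsDefective getK
  set x := (1 - γ) * ((S.card.choose 2 : ℕ) : ℝ) with hx
  have hnn : 0 ≤ x := mul_nonneg (by linarith) (Nat.cast_nonneg _)
  have hfl0 : (0:ℤ) ≤ ⌊x⌋ := Int.floor_nonneg.2 hnn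
  constructor
  · intro h
    have h3 : ((S.card.choose 2 : ℤ) - (edgesIn G S : ℤ)) ≤ ⌊x⌋ := by
      rw [Int.le_floor]
      push_cast
      rw [hx]
      nlinarith
    omega
  · intro h
    have h3 : ((S.card.choose 2 : ℤ)) ≤ (edgesIn G S : ℤ) + (⌊x⌋.toNat : ℤ) := by
      omega
    have h5 : ((⌊x⌋.toNat : ℕ) : ℤ) = ⌊x⌋ := Int.toNat_of_nonneg hfl0
    have h4 : ((⌊x⌋ : ℤ) : ℝ) ≤ x := Int.floor_le x
    have h6 : ((S.card.choose 2 : ℕ) : ℝ) ≤ (edgesIn G S : ℝ) + x := by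
      have h7 : ((S.card.choose 2 : ℤ)) ≤ (edgesIn G S : ℤ) + ⌊x⌋ := by omega
      have h8 : ((S.card.choose 2 : ℕ) : ℝ) ≤ (edgesIn G S : ℝ) + ((⌊x⌋ : ℤ) : ℝ) := by
        exact_mod_cast h7
      linarith
    rw [hx] at h6
    nlinarith

theorem sStar_greatest_check
    {V : Type*} [Fintype V] [DecidableEq V] [Nonempty V]
    (G : SimpleGraph V) [DecidableRel G.Adj]
    (γ : ℝ) (hγ0 : 0 < γ) (hγ1 : γ < 1) :
    1 ≤ sStar G γ ∧
    sStar G γ ≤ solveDefect G (getK γ (sStar G γ)) ∧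
    ∀ s : ℕ, s ≤ solveDefect G (getK γ s) → s ≤ sStar G γ := by
  obtain ⟨v⟩ := ‹Nonempty V›
  have hsingle : IsEQC G γ ({v} : Finset V) := by
    unfold IsEQC
    simp
  have hbddE : BddAbove {n | ∃ S : Finset V, IsEQC G γ S ∧ S.card = n} := by
    refine ⟨Fintype.card V, ?_⟩
    rintro n ⟨S, _, rfl⟩
    exact S.card_le_univ
  have hbddD : ∀ k : ℕ, BddAbove {n | ∃ S : Finset V, IsDefective G k S ∧ S.card = n} := by
    intro k
    refine ⟨Fintype.card V, ?_⟩
    rintro n ⟨S, _, rfl⟩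
    exact S.card_le_univ
  have hneE : {n | ∃ S : Finset V, IsEQC G γ S ∧ S.card = n}.Nonempty :=
    ⟨1, {v}, hsingle, card_singleton v⟩
  have h1 : 1 ≤ sStar G γ := le_csSup hbddE ⟨{v}, hsingle, card_singleton v⟩
  refine ⟨h1, ?_, ?_⟩
  · -- sStar ≤ solveDefect (getK sStar)
    obtain ⟨S, hS, hcard⟩ := Nat.sSup_mem hneE hbddE
    have hcard' : S.card = sStar G γ := hcard
    have hdef : IsDefective G (getK γ (sStar G γ)) S := by
      rw [← hcard']
      exact (eqc_iff_defective G hγ1 S).1 hS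
    have hle : S.card ≤ solveDefect G (getK γ (sStar G γ)) := le_csSup (hbddD _) ⟨S, hdef, rfl⟩
    rwa [hcard'] at hle
  · intro s hs
    set k := getK γ s with hk
    have hneD : {n | ∃ S : Finset V, IsDefective G k S ∧ S.card = n}.Nonempty := by
      refine ⟨0, ∅, ?_, card_empty⟩
      unfold IsDefective
      simp
    obtain ⟨S, hS, hcard⟩ := Nat.sSup_mem hneD (hbddD k)
    have hcard'' : S.card = solveDefect G k := hcard
    have hsle : s ≤ S.card := by rw [hcard'']; exact hs
    obtain ⟨T, hTS, hTcard⟩ := Finset.exists_subset_card_eq hsle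
    have hTdef : IsDefective G k T := by
      rw [defective_iff_missing] at hS ⊢
      exact le_trans (missing_mono G hTS) hS
    have hTeqc : IsEQC G γ T := by
      rw [eqc_iff_defective G hγ1 T, hTcard, ← hk]
      exact hTdef
    have : T.card ≤ sStar G γ := le_csSup hbddE ⟨T, hTeqc, rfl⟩
    rwa [hTcard] at this
end

section
/- Let G = (V,E) be a finite simple graph and let γ be a real number with 0 < γ < 1. The predicate check(s) := (s ≤ solve-defect(get-k(s))) is monotone: if check(s) holds and 1 ≤ s' ≤ s, then check(s') holds; equivalently, once check fails at some s it fails for all larger values. -/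
open Finset

section aux
variable {V : Type*} [DecidableEq V] (G : SimpleGraph V) [DecidableRel G.Adj]

def e2 (S : Finset V) : ℕ := ((S ×ˢ S).filter fun p => G.Adj p.1 p.2).card

lemma filter_fst_eq (S : Finset V) (u : V) (hu : u ∈ S) :
    (((S ×ˢ S).filter fun p => G.Adj p.1 p.2).filter fun p => p.1 = u)
      = {u} ×ˢ (S.filter fun v => G.Adj u v) := by
  ext ⟨a, b⟩
  simp only [mem_filter, mem_product, mem_singleton]
  constructor
  · rintro ⟨⟨⟨ha, hb⟩, hadj⟩, rfl⟩; exact ⟨rfl, hb, hadj⟩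
  · rintro ⟨rfl, hb, hadj⟩; exact ⟨⟨⟨hu, hb⟩, hadj⟩, rfl⟩

lemma e2_eq_sum (S : Finset V) : e2 G S = ∑ u ∈ S, degIn G S u := by
  rw [e2, Finset.card_eq_sum_card_fiberwise (f := Prod.fst) (t := S)
    (fun p hp => (Finset.mem_product.1 (Finset.mem_filter.1 hp).1).1)]
  refine Finset.sum_congr rfl fun u hu => ?_
  have := filter_fst_eq G S u hu
  simp only [Finset.filter_filter] at this ⊢
  rw [this, Finset.card_product, Finset.card_singleton, one_mul, degIn]

lemma e2_erase (S : Finset V) (u : V) (hu : u ∈ S) :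
    e2 G S = e2 G (S.erase u) + 2 * degIn G S u := by
  classical
  set A := (S ×ˢ S).filter fun p => G.Adj p.1 p.2 with hA
  have h1 : A.card = (A.filter fun p => p.1 = u).card + (A.filter fun p => ¬ p.1 = u).card :=
    (Finset.card_filter_add_card_filter_not _).symm
  have h2 : (A.filter fun p => ¬ p.1 = u).card
      = ((A.filter fun p => ¬ p.1 = u).filter fun p => p.2 = u).card
        + ((A.filter fun p => ¬ p.1 = u).filter fun p => ¬ p.2 = u).card :=
    (Finset.card_filter_add_card_filter_not _).symm
  have e1 : (A.filter fun p => p.1 = u) = {u} ×ˢ (S.filter fun v => G.Adj u v) :=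
    filter_fst_eq G S u hu
  have e2' : ((A.filter fun p => ¬ p.1 = u).filter fun p => p.2 = u)
      = (S.filter fun v => G.Adj u v) ×ˢ {u} := by
    ext ⟨a, b⟩
    simp only [hA, mem_filter, mem_product, mem_singleton]
    constructor
    · rintro ⟨⟨⟨⟨ha, hb⟩, hadj⟩, hne⟩, rfl⟩
      exact ⟨⟨ha, hadj.symm⟩, rfl⟩
    · rintro ⟨⟨ha, hadj⟩, rfl⟩
      exact ⟨⟨⟨⟨ha, hu⟩, hadj.symm⟩, fun h => G.irrefl (h ▸ hadj.symm)⟩, rfl⟩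
  have e3 : ((A.filter fun p => ¬ p.1 = u).filter fun p => ¬ p.2 = u)
      = ((S.erase u) ×ˢ (S.erase u)).filter fun p => G.Adj p.1 p.2 := by
    ext ⟨a, b⟩
    simp only [hA, mem_filter, mem_product, mem_erase, Finset.filter_filter]
    tauto
  have := h1
  rw [h2, e1, e2', e3] at this
  simp only [Finset.card_product, Finset.card_singleton, one_mul, mul_one] at this
  have g1 : e2 G S = A.card := rfl
  have g2 : e2 G (S.erase u) = ((S.erase u ×ˢ S.erase u).filter fun p => G.Adj p.1 p.2).card := rfl
  rw [g1, g2, degIn]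
  omega

lemma two_mul_edgesIn_s10 (S : Finset V) : 2 * edgesIn G S = e2 G S := by
  induction S using Finset.strongInduction with
  | _ S ih =>
    rcases S.eq_empty_or_nonempty with rfl | ⟨u, hu⟩
    · simp [e2, edgesIn]
    · have h := e2_erase G S u hu
      have hT := ih (S.erase u) (Finset.erase_ssubset hu)
      have hdef : edgesIn G S = e2 G S / 2 := rfl
      omega

lemma two_mul_choose_two (n : ℕ) : 2 * n.choose 2 = n * (n - 1) := by
  induction n with
  | zero => rfl
  | succ n ih =>
    rw [Nat.choose_succ_succ]
    cases n with
    | zero => rfl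
    | succ m =>
      simp only [Nat.succ_sub_one, Nat.choose_one_right] at *
      nlinarith [ih]

lemma eqc_erase {γ : ℝ} {S : Finset V} (hS : S.Nonempty) (h : IsEQC G γ S) :
    ∃ u ∈ S, IsEQC G γ (S.erase u) := by
  obtain ⟨u, hu, hmin⟩ := S.exists_min_image (degIn G S) hS
  refine ⟨u, hu, ?_⟩
  have hcard : (S.erase u).card = S.card - 1 := Finset.card_erase_of_mem hu
  by_cases hm : S.card ≤ 2
  · have hz : (S.erase u).card.choose 2 = 0 :=
      Nat.choose_eq_zero_of_lt (by omega)
    unfold IsEQC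
    rw [hz]
    simp
  · push_neg at hm
    set n := S.card with hn
    have hn3 : 3 ≤ n := hm
    -- nat facts
    have heN : edgesIn G S = edgesIn G (S.erase u) + degIn G S u := by
      have h1 := e2_erase G S u hu
      have h2 := two_mul_edgesIn_s10 G S
      have h3 := two_mul_edgesIn_s10 G (S.erase u)
      omega
    have hmdN : n * degIn G S u ≤ 2 * edgesIn G S := by
      rw [two_mul_edgesIn_s10, e2_eq_sum]
      calc n * degIn G S u = S.card • degIn G S u := by rw [smul_eq_mul]
        _ ≤ ∑ v ∈ S, degIn G S v := Finset.card_nsmul_le_sum S _ _ (fun v hv => hmin v hv)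
    have hC2 := two_mul_choose_two n
    have hC2' := two_mul_choose_two (n - 1)
    -- real versions
    have hm3' : (3 : ℝ) ≤ (n : ℝ) := by exact_mod_cast hn3
    have heq' : (edgesIn G S : ℝ) = (edgesIn G (S.erase u) : ℝ) + (degIn G S u : ℝ) := by
      exact_mod_cast heN
    have hmd' : (n : ℝ) * (degIn G S u : ℝ) ≤ 2 * (edgesIn G S : ℝ) := by
      exact_mod_cast hmdN
    set m : ℝ := (n : ℝ) with hmdef
    set e : ℝ := (edgesIn G S : ℝ)
    set e' : ℝ := (edgesIn G (S.erase u) : ℝ)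
    set d : ℝ := (degIn G S u : ℝ)
    set C : ℝ := ((n.choose 2 : ℕ) : ℝ)
    set C' : ℝ := (((n - 1).choose 2 : ℕ) : ℝ)
    have hm3 : (3 : ℝ) ≤ m := hm3'
    have heq : e = e' + d := heq'
    have hmd : m * d ≤ 2 * e := hmd' 
    have hc1 : ((n - 1 : ℕ) : ℝ) = m - 1 := by
      push_cast [Nat.cast_sub (by omega : 1 ≤ n)]; ring
    have hc2 : ((n - 1 - 1 : ℕ) : ℝ) = m - 2 := by
      have : n - 1 - 1 = n - 2 := by omega
      rw [this]; push_cast [Nat.cast_sub (by omega : 2 ≤ n)]; ring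
    have hC : 2 * C = m * (m - 1) := by
      have := congrArg (fun x : ℕ => (x : ℝ)) hC2
      push_cast at this
      rw [hc1] at this; exact this
    have hC' : 2 * C' = (m - 1) * (m - 2) := by
      have := congrArg (fun x : ℕ => (x : ℝ)) hC2'
      push_cast at this
      rw [hc1, hc2] at this; exact this
    have hEQC : γ * C ≤ e := h
    have hCC : C' * m = C * (m - 2) := by linear_combination (m / 2) * hC' - ((m - 2) / 2) * hC
    have hg : γ * C' * m = (γ * C) * (m - 2) := by linear_combination γ * hCC
    have h1 : (γ * C) * (m - 2) ≤ e * (m - 2) :=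
      mul_le_mul_of_nonneg_right hEQC (by linarith)
    have hem : e * m = e' * m + d * m := by rw [heq]; ring
    have key : γ * C' * m ≤ e' * m := by nlinarith [h1, hmd, hem, hg]
    have hfin : γ * C' ≤ e' := le_of_mul_le_mul_right key (by linarith)
    unfold IsEQC
    rw [hcard]
    exact hfin

lemma shrink {γ : ℝ} : ∀ S : Finset V, IsEQC G γ S → ∀ t, t ≤ S.card →
    ∃ T : Finset V, T.card = t ∧ IsEQC G γ T := by
  intro S
  induction S using Finset.strongInduction with
  | _ S ih =>
    intro hS t ht
    rcases eq_or_lt_of_le ht with heq | hlt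
    · exact ⟨S, heq.symm, hS⟩
    · have hne : S.Nonempty := Finset.card_pos.1 (by omega)
      obtain ⟨u, hu, hE⟩ := eqc_erase G hne hS
      exact ih (S.erase u) (Finset.erase_ssubset hu) hE t
        (by rw [Finset.card_erase_of_mem hu]; omega)

lemma eqc_defective {γ : ℝ} (hγ1 : γ ≤ 1) (T : Finset V) (h : IsEQC G γ T) :
    IsDefective G (getK γ T.card) T := by
  unfold IsDefective getK
  have hx : (0:ℝ) ≤ (1 - γ) * ((T.card.choose 2 : ℕ) : ℝ) :=
    mul_nonneg (by linarith) (by positivity)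
  have h1 : ((T.card.choose 2 : ℕ) : ℤ) - (edgesIn G T : ℤ)
      ≤ ⌊(1 - γ) * ((T.card.choose 2 : ℕ) : ℝ)⌋ := by
    rw [Int.le_floor]
    push_cast
    have := h
    unfold IsEQC at this
    linarith
  have h2 := Int.self_le_toNat ⌊(1 - γ) * ((T.card.choose 2 : ℕ) : ℝ)⌋
  omega

lemma defective_eqc {γ : ℝ} (hγ1 : γ ≤ 1) {s : ℕ} {S : Finset V} (hs : s ≤ S.card)
    (h : IsDefective G (getK γ s) S) : IsEQC G γ S := by
  have hx : (0:ℝ) ≤ (1 - γ) * ((s.choose 2 : ℕ) : ℝ) :=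
    mul_nonneg (by linarith) (by positivity)
  have hk : ((getK γ s : ℕ) : ℝ) ≤ (1 - γ) * ((s.choose 2 : ℕ) : ℝ) := by
    unfold getK
    have h' : ((⌊(1 - γ) * ((s.choose 2 : ℕ) : ℝ)⌋.toNat : ℤ) : ℝ) ≤ (1 - γ) * ((s.choose 2 : ℕ) : ℝ) := by
      rw [Int.toNat_of_nonneg (Int.floor_nonneg.2 hx)]
      exact Int.floor_le _
    exact_mod_cast h' 
  have hmono : ((s.choose 2 : ℕ) : ℝ) ≤ ((S.card.choose 2 : ℕ) : ℝ) :=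
    Nat.cast_le.2 (Nat.choose_le_choose 2 hs)
  have hcast : ((S.card.choose 2 : ℕ) : ℝ) ≤ (edgesIn G S : ℝ) + ((getK γ s : ℕ) : ℝ) := by
    exact_mod_cast h
  unfold IsEQC
  nlinarith [mul_le_mul_of_nonneg_left hmono (by linarith : (0:ℝ) ≤ 1 - γ)]

end aux

theorem check_monotone
    {V : Type*} [Fintype V] [DecidableEq V]
    (G : SimpleGraph V) [DecidableRel G.Adj]
    (γ : ℝ) (hγ0 : 0 < γ) (hγ1 : γ < 1) :
    ∀ s s' : ℕ, s ≤ solveDefect G (getK γ s) → 1 ≤ s' → s' ≤ s →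
      s' ≤ solveDefect G (getK γ s') := by
  intro s s' hs hs'1 hs's
  have hbdd : ∀ k : ℕ, BddAbove {n | ∃ S : Finset V, IsDefective G k S ∧ S.card = n} := by
    intro k
    exact ⟨Fintype.card V, by rintro n ⟨S, -, rfl⟩; exact Finset.card_le_univ S⟩
  have hne : ({n | ∃ S : Finset V, IsDefective G (getK γ s) S ∧ S.card = n}).Nonempty :=
    ⟨0, ∅, by simp [IsDefective], Finset.card_empty⟩
  have hmem : solveDefect G (getK γ s) ∈
      {n | ∃ S : Finset V, IsDefective G (getK γ s) S ∧ S.card = n} :=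
    Nat.sSup_mem hne (hbdd _)
  obtain ⟨S, hdef, hcardS⟩ := hmem
  have hsS : s ≤ S.card := by rw [hcardS]; exact hs
  have hE : IsEQC G γ S := defective_eqc G (le_of_lt hγ1) hsS hdef
  obtain ⟨T, hTcard, hTE⟩ := shrink G S hE s' (le_trans hs's hsS)
  have hTdef : IsDefective G (getK γ T.card) T := eqc_defective G (le_of_lt hγ1) T hTE
  rw [hTcard] at hTdef
  exact le_csSup (hbdd _) ⟨T, hTdef, hTcard⟩
end

section
/- Let G = (V,E) be a finite simple graph and let γ be a real number with 0 < γ < 1. If S* ⊆ V is such that G[S*] is an edge-based γ-quasi-clique of maximum size s* = |S*|, then G[S*] is a k*-defective clique for k* = get-k(s*) = ⌊(1−γ)·C(s*,2)⌋, and moreover s* = solve-defect(k*), i.e., G[S*] is a maximum k*-defective clique in G. -/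
open Finset

/-!
A γ-quasi-clique on `s` vertices misses at most `(1 - γ) C(s,2)` edges, and, this number of
missing edges being an integer, at most `k = ⌊(1 - γ) C(s,2)⌋` of them. Conversely a
`k`-defective clique `T` with `|T| ≥ s` misses at most `k ≤ (1 - γ) C(|T|,2)` edges, so it is a
γ-quasi-clique; maximality of `s` then forbids `|T| > s`.
-/

theorem getK_le {γ : ℝ} (hγ : γ ≤ 1) (s : ℕ) :
    (getK γ s : ℝ) ≤ (1 - γ) * (s.choose 2 : ℕ) := by
  rw [getK, Int.floor_toNat]
  exact Nat.floor_le (by positivity [sub_nonneg.2 hγ])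

theorem isDefective_getK_of_isEQC {V : Type*} {G : SimpleGraph V} [DecidableRel G.Adj]
    {γ : ℝ} {S : Finset V} (h : IsEQC G γ S) : IsDefective G (getK γ S.card) S := by
  rw [IsEQC] at h
  rw [IsDefective, getK]
  set c := S.card.choose 2
  have hfloor : (c : ℤ) - edgesIn G S ≤ ⌊(1 - γ) * (c : ℝ)⌋ := by
    rw [Int.le_floor]
    push_cast
    linarith
  have htoNat := Int.self_le_toNat ⌊(1 - γ) * (c : ℝ)⌋
  omega

theorem isEQC_of_isDefective_getK {V : Type*} {G : SimpleGraph V} [DecidableRel G.Adj]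
    {γ : ℝ} (hγ : γ ≤ 1) {s : ℕ} {T : Finset V} (hs : s ≤ T.card)
    (hT : IsDefective G (getK γ s) T) : IsEQC G γ T := by
  have hT' : ((T.card.choose 2 : ℕ) : ℝ) ≤ edgesIn G T + getK γ s := by exact_mod_cast hT
  have hchoose : ((s.choose 2 : ℕ) : ℝ) ≤ (T.card.choose 2 : ℕ) := by
    exact_mod_cast Nat.choose_le_choose 2 hs
  have hscaled := mul_le_mul_of_nonneg_left hchoose (sub_nonneg.2 hγ)
  rw [IsEQC]
  linarith [getK_le hγ s]

theorem max_eqc_is_max_defective_general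
    {V : Type*} (G : SimpleGraph V) [DecidableRel G.Adj]
    (γ : ℝ) (hγ1 : γ < 1)
    (S : Finset V) (hEQC : IsEQC G γ S)
    (hmax : ∀ T : Finset V, IsEQC G γ T → T.card ≤ S.card) :
    IsDefective G (getK γ S.card) S ∧ solveDefect G (getK γ S.card) = S.card := by
  have hdef := isDefective_getK_of_isEQC hEQC
  refine ⟨hdef, IsGreatest.csSup_eq ⟨⟨S, hdef, rfl⟩, ?_⟩⟩
  rintro _ ⟨T, hT, rfl⟩
  by_contra! hlt
  exact (hmax T (isEQC_of_isDefective_getK hγ1.le hlt.le hT)).not_gt hlt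

theorem max_eqc_is_max_defective
    {V : Type*} [Fintype V] [DecidableEq V] (G : SimpleGraph V) [DecidableRel G.Adj]
    (γ : ℝ) (hγ0 : 0 < γ) (hγ1 : γ < 1)
    (S : Finset V) (hEQC : IsEQC G γ S)
    (hmax : ∀ T : Finset V, IsEQC G γ T → T.card ≤ S.card) :
    IsDefective G (getK γ S.card) S ∧ solveDefect G (getK γ S.card) = S.card :=
  max_eqc_is_max_defective_general G γ hγ1 S hEQC hmax
end
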